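/- Let n ≥ 2 be an integer and p ∈ (0,1]. With λ = (1-p)^{n-1} and g(x) = (n/(n-1))(λ+x)^{1/(n-1)} for x ∈ [0, 1−λ], one has ∫_0^{1-λ} x g(x) dx = n/(2n−1) + ((n−1)/(2n−1))(1-p)^{2n-1} − (1-p)^{n-1}. -/

import Mathlib

/-! Substituting `y = λ + x` turns the integrand into `(n/(n-1)) (y - λ) y^{1/(n-1)}`, a
difference of two powers of `y` integrated over `[λ, 1]`. Since `λ = (1-p)^{n-1}`, the
boundary values `λ^{n/(n-1)}` and `λ^{(2n-1)/(n-1)}` are the integer powers `(1-p)^n` and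
`(1-p)^{2n-1}`. -/

open intervalIntegral

theorem integral_sub_mul_rpow {a c d lam : ℝ} (ha : -1 < a) (hc : 0 ≤ c) (hd : 0 ≤ d) :
    ∫ y in c..d, (y - lam) * y ^ a
      = (d ^ (a + 2) - c ^ (a + 2)) / (a + 2) - lam * ((d ^ (a + 1) - c ^ (a + 1)) / (a + 1)) := by
  have hsplit : Set.EqOn (fun y : ℝ => (y - lam) * y ^ a)
      (fun y => y ^ (a + 1) - lam * y ^ a) (Set.uIcc c d) := by
    intro y hy
    have hy0 : 0 ≤ y := le_trans (le_min hc hd) hy.1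
    show (y - lam) * y ^ a = y ^ (a + 1) - lam * y ^ a
    rw [Real.rpow_add_one' hy0 (by linarith)]
    ring
  have ha' : -1 < a + 1 := by linarith
  rw [integral_congr hsplit,
    integral_sub (intervalIntegrable_rpow' ha') ((intervalIntegrable_rpow' ha).const_mul lam),
    integral_const_mul, integral_rpow (Or.inl ha'), integral_rpow (Or.inl ha),
    show a + 1 + 1 = a + 2 by ring]

theorem integral_mul_add_rpow {a b lam : ℝ} (ha : -1 < a) (hlam : 0 ≤ lam) (hb : 0 ≤ lam + b) :
    ∫ x in (0 : ℝ)..b, x * (lam + x) ^ a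
      = ((lam + b) ^ (a + 2) - lam ^ (a + 2)) / (a + 2)
          - lam * (((lam + b) ^ (a + 1) - lam ^ (a + 1)) / (a + 1)) := by
  have hshift := integral_comp_add_left (a := 0) (b := b) (fun y : ℝ => (y - lam) * y ^ a) lam
  simp only [add_sub_cancel_left, add_zero] at hshift
  rw [hshift, integral_sub_mul_rpow ha hlam hb]

theorem pow_rpow_natCast_div {q : ℝ} (hq : 0 ≤ q) {m : ℕ} (hm : m ≠ 0) (k : ℕ) :
    (q ^ m) ^ ((k : ℝ) / m) = q ^ k := by
  rw [← Real.rpow_natCast_mul hq, mul_div_cancel₀ _ (by exact_mod_cast hm), Real.rpow_natCast]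

theorem stmt15 (n : ℕ) (hn : 2 ≤ n) (p : ℝ) (hp : p ∈ Set.Ioc (0 : ℝ) 1)
    (lam : ℝ) (hlam : lam = (1 - p) ^ (n - 1)) :
    ∫ x in (0 : ℝ)..(1 - lam),
        x * (((n : ℝ) / ((n : ℝ) - 1)) * (lam + x) ^ ((1 : ℝ) / ((n : ℝ) - 1)))
      = (n : ℝ) / (2 * n - 1) + (((n : ℝ) - 1) / (2 * n - 1)) * (1 - p) ^ (2 * n - 1)
          - (1 - p) ^ (n - 1) := by
  obtain ⟨m, rfl⟩ : ∃ m, n = m + 1 := ⟨n - 1, by omega⟩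
  have hm : m ≠ 0 := by omega
  have hmR : (0 : ℝ) < m := by exact_mod_cast Nat.pos_of_ne_zero hm
  have hq : 0 ≤ 1 - p := by linarith [hp.2]
  simp only [Nat.add_sub_cancel, show 2 * (m + 1) - 1 = 2 * m + 1 by omega] at hlam ⊢
  push_cast
  simp only [add_sub_cancel_right, mul_left_comm _ ((m + 1 : ℝ) / m), integral_const_mul]
  have hlam0 : 0 ≤ lam := hlam ▸ pow_nonneg hq m
  rw [integral_mul_add_rpow (by linarith [one_div_pos.2 hmR]) hlam0 (by linarith), add_sub_cancel,
    show (1 : ℝ) / m + 1 = ((m + 1 : ℕ) : ℝ) / m by push_cast; field_simp; ring,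
    show (1 : ℝ) / m + 2 = ((2 * m + 1 : ℕ) : ℝ) / m by push_cast; field_simp; ring,
    hlam, pow_rpow_natCast_div hq hm, pow_rpow_natCast_div hq hm, Real.one_rpow, Real.one_rpow]
  push_cast
  rw [show 2 * ((m : ℝ) + 1) - 1 = 2 * m + 1 by ring, show 2 * m + 1 = m + (m + 1) by ring,
    pow_add]
  field_simp
  ring
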